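/- (Soundness of rule-matching bisimilarity) Let G be a GSOS language without junk rules, and let P, Q be Σ_G-terms. If P ≈RM_G Q (P and Q are rule-matching bisimilar), then Algbis(G) ⊨ P = Q, i.e., Pσ ↔_G Qσ for every closed Σ_G-substitution σ. -/

import Mathlib

/-!
Common infrastructure for formalizing results about GSOS languages
("A rule-matching bisimulation method", Aceto et al.).

* Variables are natural numbers (a countably infinite set).
* Terms over a signature given by a type `Op` of operation symbols with
  arities `ar : Op → ℕ`.
* GSOS rules and ruloids, the induced (sound and supported) transition
  relation, bisimilarity, ruloid systems, valid ruloids, initial transition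
  formulae and rule-matching bisimulation.
-/

namespace GSOSPaper

/-- Terms over operation symbols `Op` with arity function `ar`;
variables are natural numbers. -/
inductive Tm (Op : Type) (ar : Op → ℕ) : Type
  | var : ℕ → Tm Op ar
  | app : (f : Op) → (Fin (ar f) → Tm Op ar) → Tm Op ar

namespace Tm

variable {Op : Type} {ar : Op → ℕ}

/-- The set of variables occurring in a term. -/
def vars : Tm Op ar → Set ℕ
  | .var x => {x}
  | .app _ ts => ⋃ i, (ts i).vars

/-- The set of operation symbols occurring in a term. -/
def ops : Tm Op ar → Set Op
  | .var _ => ∅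
  | .app f ts => insert f (⋃ i, (ts i).ops)

/-- A term is closed if it contains no variables. -/
def IsClosed (t : Tm Op ar) : Prop := t.vars = ∅

/-- Applying a substitution to a term. -/
def subst (σ : ℕ → Tm Op ar) : Tm Op ar → Tm Op ar
  | .var x => σ x
  | .app f ts => .app f fun i => (ts i).subst σ

/-- Renaming the variables of a term. -/
def rename (r : ℕ → ℕ) (t : Tm Op ar) : Tm Op ar :=
  t.subst fun x => .var (r x)

/-- The number of occurrences of the variable `v` in a term. -/
def count (v : ℕ) : Tm Op ar → ℕ
  | .var x => if x = v then 1 else 0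
  | .app _ ts => ∑ i, (ts i).count v

/-- Transporting a term along an arity-preserving map of operation symbols. -/
def map {Op' : Type} {ar' : Op' → ℕ} (ι : Op → Op') (h : ∀ f, ar' (ι f) = ar f) :
    Tm Op ar → Tm Op' ar'
  | .var x => .var x
  | .app f ts => .app (ι f) fun i => (ts (Fin.cast (h f) i)).map ι h

end Tm

/-- A closed `S`-substitution: every variable is sent to a closed term all of
whose operation symbols come from `S`. -/
def ClosedSub {Op : Type} {ar : Op → ℕ} (S : Set Op) (σ : ℕ → Tm Op ar) : Prop :=
  ∀ x, (σ x).IsClosed ∧ (σ x).ops ⊆ S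

/-- A rule (this data type is used both for GSOS rules and for ruloids):
positive premises `x →^a y` (coded as `(x, a, y)`), negative premises
`x ↛^a` (coded as `(x, a)`), a source term, an action, and a target term. -/
structure Rule (Op : Type) (ar : Op → ℕ) (Act : Type) where
  pos : Set (ℕ × Act × ℕ)
  neg : Set (ℕ × Act)
  src : Tm Op ar
  act : Act
  tgt : Tm Op ar

namespace Rule

variable {Op : Type} {ar : Op → ℕ} {Act : Type}

/-- The source variables of a rule/ruloid: the variables of its source. -/
def sourceVars (ρ : Rule Op ar Act) : Set ℕ := ρ.src.vars

/-- The target variables of a rule/ruloid: the right-hand sides of its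
positive premises. -/
def targetVars (ρ : Rule Op ar Act) : Set ℕ := {y | ∃ x a, (x, a, y) ∈ ρ.pos}

/-- Well-formedness of a rule/ruloid: finitely many premises; the left-hand
sides of premises are source variables; the target variables are distinct
from the source variables and pairwise distinct (each target variable occurs
in exactly one positive premise); the variables of the target of the
conclusion occur among the source and target variables. -/
def WF (ρ : Rule Op ar Act) : Prop :=
  ρ.pos.Finite ∧ ρ.neg.Finite ∧
  (∀ ⦃x a y⦄, (x, a, y) ∈ ρ.pos → x ∈ ρ.sourceVars ∧ y ∉ ρ.sourceVars) ∧
  (∀ ⦃x a⦄, (x, a) ∈ ρ.neg → x ∈ ρ.sourceVars) ∧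
  (∀ ⦃x a y x' a'⦄, (x, a, y) ∈ ρ.pos → (x', a', y) ∈ ρ.pos → x = x' ∧ a = a') ∧
  ρ.tgt.vars ⊆ ρ.sourceVars ∪ ρ.targetVars

/-- A rule is in GSOS format if it is well formed and its source is
`f(x₁, …, x_l)` for an operation symbol `f` and distinct variables `x_i`. -/
def IsGSOSForm (ρ : Rule Op ar Act) : Prop :=
  ρ.WF ∧ ∃ (f : Op) (x : Fin (ar f) → ℕ), Function.Injective x ∧
    ρ.src = Tm.app f fun i => Tm.var (x i)

/-- A rule is a de Simone rule if it has no negative premises, at most one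
positive premise per source variable, a target in which every variable occurs
at most once, and a target containing no source variable that occurs in a
positive premise. -/
def IsDeSimone (ρ : Rule Op ar Act) : Prop :=
  ρ.neg = ∅ ∧
  (∀ ⦃x a y a' y'⦄, (x, a, y) ∈ ρ.pos → (x, a', y') ∈ ρ.pos → a = a' ∧ y = y') ∧
  (∀ v, ρ.tgt.count v ≤ 1) ∧
  (∀ ⦃x a y⦄, (x, a, y) ∈ ρ.pos → x ∉ ρ.tgt.vars)

/-- `ρ` has principal operation `f`. -/
def PrincipalIs (ρ : Rule Op ar Act) (f : Op) : Prop := ∃ ts, ρ.src = Tm.app f ts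

/-- A rule is non-inheriting if no source variable occurs in the target of
its conclusion. -/
def NonInheriting (ρ : Rule Op ar Act) : Prop := ∀ x ∈ ρ.sourceVars, x ∉ ρ.tgt.vars

/-- Renaming the variables of a rule/ruloid. -/
def rename (r : ℕ → ℕ) (ρ : Rule Op ar Act) : Rule Op ar Act where
  pos := (fun p : ℕ × Act × ℕ => (r p.1, p.2.1, r p.2.2)) '' ρ.pos
  neg := (fun p : ℕ × Act => (r p.1, p.2)) '' ρ.neg
  src := ρ.src.rename r
  act := ρ.act
  tgt := ρ.tgt.rename r

/-- Transporting a rule along an arity-preserving map of operation symbols. -/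
def map {Op' : Type} {ar' : Op' → ℕ} (ι : Op → Op') (h : ∀ f, ar' (ι f) = ar f)
    (ρ : Rule Op ar Act) : Rule Op' ar' Act where
  pos := ρ.pos
  neg := ρ.neg
  src := ρ.src.map ι h
  act := ρ.act
  tgt := ρ.tgt.map ι h

end Rule

/-- A language: a set of operation symbols together with a set of rules.
(Well-formedness is the separate predicate `Lang.WellFormed`.) -/
structure Lang (Op : Type) (ar : Op → ℕ) (Act : Type) where
  ops : Set Op
  rules : Set (Rule Op ar Act)

/-- A GSOS language: finitely many operations, finitely many rules, and all
rules in GSOS format over the signature. -/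
def Lang.WellFormed {Op : Type} {ar : Op → ℕ} {Act : Type} (L : Lang Op ar Act) : Prop :=
  L.ops.Finite ∧ L.rules.Finite ∧
  ∀ ρ ∈ L.rules, ρ.IsGSOSForm ∧ ρ.src.ops ⊆ L.ops ∧ ρ.tgt.ops ⊆ L.ops

variable {Op : Type} {ar : Op → ℕ} {Act : Type}

/-- `σ` satisfies the antecedents of `ρ` with respect to the transition
relation `Tr`. -/
def Satisfies (Tr : Tm Op ar → Act → Tm Op ar → Prop) (σ : ℕ → Tm Op ar)
    (ρ : Rule Op ar Act) : Prop :=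
  (∀ ⦃x a y⦄, (x, a, y) ∈ ρ.pos → Tr (σ x) a (σ y)) ∧
  (∀ ⦃x a⦄, (x, a) ∈ ρ.neg → ∀ q, ¬ Tr (σ x) a q)

/-- A rule/ruloid is sound for `Tr` (relative to closed `S`-substitutions) if
every closed substitution satisfying its antecedents yields an instance of
its conclusion that is in `Tr`. -/
def Rule.Sound (Tr : Tm Op ar → Act → Tm Op ar → Prop) (S : Set Op)
    (ρ : Rule Op ar Act) : Prop :=
  ∀ σ, ClosedSub S σ → Satisfies Tr σ ρ →
    Tr (ρ.src.subst σ) ρ.act (ρ.tgt.subst σ)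

/-- The rule/ruloid `ρ` supports the transition `p →^a q`. -/
def Supports (Tr : Tm Op ar → Act → Tm Op ar → Prop) (S : Set Op)
    (ρ : Rule Op ar Act) (p : Tm Op ar) (a : Act) (q : Tm Op ar) : Prop :=
  ∃ σ, ClosedSub S σ ∧ Satisfies Tr σ ρ ∧
    ρ.src.subst σ = p ∧ ρ.act = a ∧ ρ.tgt.subst σ = q

/-- `Tr` is the transition relation induced by the language `L`: it is sound
(every rule instance with satisfied antecedents is a transition) and
supported (every transition is supported by some rule of `L`).  For a GSOS
language there is a unique such relation. -/
def IsTransRel (L : Lang Op ar Act) (Tr : Tm Op ar → Act → Tm Op ar → Prop) : Prop :=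
  (∀ ρ ∈ L.rules, ρ.Sound Tr L.ops) ∧
  (∀ p a q, Tr p a q → ∃ ρ ∈ L.rules, Supports Tr L.ops ρ p a q)

/-- A rule is junk if it supports no transition. -/
def IsJunk (L : Lang Op ar Act) (Tr : Tm Op ar → Act → Tm Op ar → Prop)
    (ρ : Rule Op ar Act) : Prop :=
  ∀ p a q, ¬ Supports Tr L.ops ρ p a q

/-- `R` is a bisimulation with respect to `Tr`. -/
def IsBisim (Tr : Tm Op ar → Act → Tm Op ar → Prop)
    (R : Tm Op ar → Tm Op ar → Prop) : Prop :=
  Symmetric R ∧ ∀ p q, R p q → ∀ a p', Tr p a p' → ∃ q', Tr q a q' ∧ R p' q'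

/-- Bisimilarity with respect to `Tr`. -/
def Bisim (Tr : Tm Op ar → Act → Tm Op ar → Prop) (p q : Tm Op ar) : Prop :=
  ∃ R, IsBisim Tr R ∧ R p q

/-- `ρ` is a ruloid for the context `D` (over the operations `S`). -/
def IsRuloidFor (S : Set Op) (ρ : Rule Op ar Act) (D : Tm Op ar) : Prop :=
  ρ.WF ∧ ρ.src = D ∧ ρ.tgt.ops ⊆ S

/-- A set `R` of ruloids is supporting for the context `D` and the action `c`:
whenever a closed instance of `D` has a `c`-transition, that transition is an
instance of the conclusion of a ruloid of `R` under a closed substitution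
satisfying its antecedents. -/
def SupportingFor (Tr : Tm Op ar → Act → Tm Op ar → Prop) (S : Set Op)
    (R : Set (Rule Op ar Act)) (D : Tm Op ar) (c : Act) : Prop :=
  ∀ σ₀ q, ClosedSub S σ₀ → Tr (D.subst σ₀) c q →
    ∃ ρ ∈ R, ∃ σ, ClosedSub S σ ∧ Satisfies Tr σ ρ ∧
      ρ.src.subst σ = D.subst σ₀ ∧ ρ.act = c ∧ ρ.tgt.subst σ = q

/-- `rul` assigns to each term `P` a finite set `rul P` of ruloids for `P`
that is sound and supporting for `P` and each action (such an assignment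
exists by the Ruloid Theorem). -/
def IsRuloidSystem (L : Lang Op ar Act) (Tr : Tm Op ar → Act → Tm Op ar → Prop)
    (rul : Tm Op ar → Set (Rule Op ar Act)) : Prop :=
  ∀ P : Tm Op ar,
    (rul P).Finite ∧
    (∀ ρ ∈ rul P, IsRuloidFor L.ops ρ P) ∧
    (∀ ρ ∈ rul P, ρ.Sound Tr L.ops) ∧
    (∀ c : Act, SupportingFor Tr L.ops {ρ | ρ ∈ rul P ∧ ρ.act = c} P c)

/-- The ruloid system `rul` is junk-free: every ruloid in it supports some
transition, i.e. its antecedents are satisfiable by a closed substitution. -/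
def JunkFree (L : Lang Op ar Act) (Tr : Tm Op ar → Act → Tm Op ar → Prop)
    (rul : Tm Op ar → Set (Rule Op ar Act)) : Prop :=
  ∀ P, ∀ ρ ∈ rul P, ∃ σ, ClosedSub L.ops σ ∧ Satisfies Tr σ ρ

/-- `ρ` is a valid ruloid for `P`: it is obtained from a ruloid `ρ' ∈ rul P`
by an injective renaming of its target variables to variables that are not
among the source variables of `ρ`. -/
def IsValidRuloid (rul : Tm Op ar → Set (Rule Op ar Act)) (P : Tm Op ar)
    (ρ : Rule Op ar Act) : Prop :=
  ∃ ρ' ∈ rul P, ∃ r : ℕ → ℕ,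
    (∀ x, x ∉ ρ'.targetVars → r x = x) ∧
    Set.InjOn r ρ'.targetVars ∧
    (∀ y ∈ ρ'.targetVars, r y ∉ ρ.sourceVars) ∧
    ρ = ρ'.rename r

/-- `σ` satisfies `hyps(ρ)`, the conjunction of the initial transition
formulae corresponding to the antecedents of `ρ` (the atom `x →^a` for a
positive premise `x →^a y`, and its negation for a negative premise). -/
def HypsSat (Tr : Tm Op ar → Act → Tm Op ar → Prop) (σ : ℕ → Tm Op ar)
    (ρ : Rule Op ar Act) : Prop :=
  (∀ ⦃x a y⦄, (x, a, y) ∈ ρ.pos → ∃ q, Tr (σ x) a q) ∧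
  (∀ ⦃x a⦄, (x, a) ∈ ρ.neg → ∀ q, ¬ Tr (σ x) a q)

/-- `R` is a rule-matching bisimulation (Definition 5.1). -/
def IsRMBisim (L : Lang Op ar Act) (Tr : Tm Op ar → Act → Tm Op ar → Prop)
    (rul : Tm Op ar → Set (Rule Op ar Act))
    (R : Tm Op ar → Tm Op ar → Prop) : Prop :=
  Symmetric R ∧
  ∀ P Q, R P Q → ∀ ρ ∈ rul P,
    ∃ J : Set (Rule Op ar Act), J.Finite ∧
      (∀ ρ' ∈ J, IsValidRuloid rul Q ρ') ∧
      (∀ ρ' ∈ J,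
        ρ'.act = ρ.act ∧
        R ρ.tgt ρ'.tgt ∧
        (ρ'.targetVars ∪ ρ.targetVars) ∩ (ρ.sourceVars ∪ ρ'.sourceVars) = ∅ ∧
        (∀ y ∈ ρ.targetVars ∩ ρ'.targetVars,
          ∃ x, x ∈ ρ.sourceVars ∩ ρ'.sourceVars ∧
            ∃ b, (x, b, y) ∈ ρ.pos ∧ (x, b, y) ∈ ρ'.pos)) ∧
      (∀ σ, ClosedSub L.ops σ → HypsSat Tr σ ρ → ∃ ρ' ∈ J, HypsSat Tr σ ρ')

/-- Rule-matching bisimilarity. -/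
def RMBisim (L : Lang Op ar Act) (Tr : Tm Op ar → Act → Tm Op ar → Prop)
    (rul : Tm Op ar → Set (Rule Op ar Act)) (P Q : Tm Op ar) : Prop :=
  ∃ R, IsRMBisim L Tr rul R ∧ R P Q

/-- Initial transition formulae: propositional logic over atoms `x →^a`. -/
inductive TF (Act : Type) : Type
  | tru : TF Act
  | atom : ℕ → Act → TF Act
  | not : TF Act → TF Act
  | and : TF Act → TF Act → TF Act

/-- Satisfaction of an initial transition formula by a substitution. -/
def TF.Sat (Tr : Tm Op ar → Act → Tm Op ar → Prop) (σ : ℕ → Tm Op ar) :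
    TF Act → Prop
  | .tru => True
  | .atom x a => ∃ q, Tr (σ x) a q
  | .not F => ¬ TF.Sat Tr σ F
  | .and F F' => TF.Sat Tr σ F ∧ TF.Sat Tr σ F'

/-- Semantic entailment `⊨ F ⇒ F'` over closed `S`-substitutions. -/
def Entails (S : Set Op) (Tr : Tm Op ar → Act → Tm Op ar → Prop)
    (F F' : TF Act) : Prop :=
  ∀ σ, ClosedSub S σ → TF.Sat Tr σ F → TF.Sat Tr σ F'

/-- `L'` (over operations `Op'`) is a disjoint extension of `L` (over `Op`),
along the arity-preserving injection `ι`: the signature and rules of `L'`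
include those of `L`, and `L'` has no new rules for the operations of `L`. -/
def IsDisjointExtension {Op' : Type} {ar' : Op' → ℕ} (ι : Op → Op')
    (h : ∀ f, ar' (ι f) = ar f) (L' : Lang Op' ar' Act) (L : Lang Op ar Act) : Prop :=
  Function.Injective ι ∧
  (∀ f ∈ L.ops, ι f ∈ L'.ops) ∧
  (∀ ρ ∈ L.rules, ρ.map ι h ∈ L'.rules) ∧
  (∀ ρ' ∈ L'.rules, (∃ f ∈ L.ops, ρ'.PrincipalIs (ι f)) → ∃ ρ ∈ L.rules, ρ' = ρ.map ι h)

/-- The term `f(t, u)` for a binary operation symbol `f`. -/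
def binT (f : Op) (t u : Tm Op ar) : Tm Op ar :=
  Tm.app f fun i => if (i : ℕ) = 0 then t else u

/-- The term `f` for a constant symbol `f`. -/
def constT (f : Op) : Tm Op ar := Tm.app f fun _ => Tm.var 0

/-- The term `f(t)` for a unary operation symbol `f`. -/
def unT (f : Op) (t : Tm Op ar) : Tm Op ar := Tm.app f fun _ => t

/-!
Close a rule-matching bisimulation `R` under closed substitutions. Given `R P Q` and
`Pσ →^a p'`, the supporting property of `ruloids(P)` derives the transition from some
`ρ ∈ ruloids(P)` by a closed substitution `σ'` that differs from `σ` only on the target variables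
of `ρ`. Since `σ'` satisfies `hyps(ρ)`, it satisfies `hyps(ρ')` for a matching valid ruloid `ρ'`
for `Q`. Those are only initial transition formulae, so `σ'` is redefined on the fresh target
variables of `ρ'` to pick actual successors; on the target variables shared with `ρ` it already
does, because the corresponding premises are shared. The resulting `τ` still maps the target of
`ρ` to `p'`, and soundness of `ρ'` gives `Qσ →^a C'τ` for the target `C'` of `ρ'`, which `R`
relates to the target of `ρ`.
-/

namespace Tm

theorem subst_congr {σ τ : ℕ → Tm Op ar} :
    ∀ t : Tm Op ar, (∀ x ∈ t.vars, σ x = τ x) → t.subst σ = t.subst τ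
  | .var x, h => h x rfl
  | .app f ts, h => congrArg (Tm.app f) <| funext fun i =>
      subst_congr (ts i) fun x hx => h x (Set.mem_iUnion.mpr ⟨i, hx⟩)

theorem eq_on_vars_of_subst_eq {σ τ : ℕ → Tm Op ar} :
    ∀ t : Tm Op ar, t.subst σ = t.subst τ → ∀ x ∈ t.vars, σ x = τ x
  | .var _, h, _, rfl => h
  | .app _ ts, h, x, hx => by
    obtain ⟨i, hi⟩ := Set.mem_iUnion.mp hx
    exact eq_on_vars_of_subst_eq (ts i) (congrFun (eq_of_heq (Tm.app.inj h).2) i) x hi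

theorem subst_subst (σ τ : ℕ → Tm Op ar) :
    ∀ t : Tm Op ar, (t.subst σ).subst τ = t.subst fun x => (σ x).subst τ
  | .var _ => rfl
  | .app f ts => congrArg (Tm.app f) <| funext fun i => subst_subst σ τ (ts i)

theorem rename_subst (r : ℕ → ℕ) (σ : ℕ → Tm Op ar) (t : Tm Op ar) :
    (t.rename r).subst σ = t.subst fun x => σ (r x) :=
  subst_subst _ _ t

theorem subst_var : ∀ t : Tm Op ar, (t.subst fun x => Tm.var x) = t
  | .var _ => rfl
  | .app f ts => congrArg (Tm.app f) <| funext fun i => subst_var (ts i)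

theorem rename_eq_self {t : Tm Op ar} {r : ℕ → ℕ} (h : ∀ x ∈ t.vars, r x = x) :
    t.rename r = t :=
  (subst_congr t fun x hx => by rw [h x hx]).trans (subst_var t)

theorem vars_rename (r : ℕ → ℕ) : ∀ t : Tm Op ar, (t.rename r).vars = r '' t.vars
  | .var x => (Set.image_singleton).symm
  | .app _ ts => by
    simp only [rename, subst, vars, Set.image_iUnion]
    exact Set.iUnion_congr fun i => vars_rename r (ts i)

theorem ops_rename (r : ℕ → ℕ) : ∀ t : Tm Op ar, (t.rename r).ops = t.ops
  | .var _ => rfl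
  | .app f ts => by
    simp only [rename, subst, ops]
    exact congrArg (insert f) (Set.iUnion_congr fun i => ops_rename r (ts i))

end Tm

theorem ClosedSub.subst {S : Set Op} {σ : ℕ → Tm Op ar} (hσ : ClosedSub S σ) :
    ∀ t : Tm Op ar, t.ops ⊆ S → (t.subst σ).IsClosed ∧ (t.subst σ).ops ⊆ S
  | .var x, _ => hσ x
  | .app f ts, ht => by
    have hts : ∀ i, (ts i).ops ⊆ S := fun i g hg =>
      ht (Set.mem_insert_of_mem f (Set.mem_iUnion.mpr ⟨i, hg⟩))
    refine ⟨Set.iUnion_eq_empty.mpr fun i => (hσ.subst (ts i) (hts i)).1, ?_⟩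
    rintro g (rfl | hg)
    · exact ht (Set.mem_insert g _)
    · obtain ⟨i, hi⟩ := Set.mem_iUnion.mp hg
      exact (hσ.subst (ts i) (hts i)).2 hi

theorem ClosedSub.piecewise {S : Set Op} {σ τ : ℕ → Tm Op ar} (s : Set ℕ)
    [∀ x, Decidable (x ∈ s)] (hσ : ClosedSub S σ) (hτ : ClosedSub S τ) :
    ClosedSub S (s.piecewise σ τ) := fun x => by
  by_cases hx : x ∈ s
  · rw [Set.piecewise_eq_of_mem s σ τ hx]; exact hσ x
  · rw [Set.piecewise_eq_of_notMem s σ τ hx]; exact hτ x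

theorem IsTransRel.target_closed {L : Lang Op ar Act} {Tr : Tm Op ar → Act → Tm Op ar → Prop}
    (hTr : IsTransRel L Tr) (hL : L.WellFormed) {p : Tm Op ar} {a : Act} {q : Tm Op ar}
    (h : Tr p a q) : q.IsClosed ∧ q.ops ⊆ L.ops := by
  obtain ⟨ρ, hρ, σ, hσ, -, -, -, rfl⟩ := hTr.2 p a q h
  exact hσ.subst ρ.tgt (hL.2.2 ρ hρ).2.2

namespace Rule

variable {ρ : Rule Op ar Act} {r : ℕ → ℕ}

theorem mem_rename_pos {x : ℕ} {b : Act} {y : ℕ} :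
    (x, b, y) ∈ (ρ.rename r).pos ↔ ∃ x₀ y₀, (x₀, b, y₀) ∈ ρ.pos ∧ r x₀ = x ∧ r y₀ = y := by
  simp only [rename, Set.mem_image, Prod.exists, Prod.mk.injEq]
  constructor
  · rintro ⟨x₀, b₀, y₀, hm, hx, rfl, hy⟩
    exact ⟨x₀, y₀, hm, hx, hy⟩
  · rintro ⟨x₀, y₀, hm, hx, hy⟩
    exact ⟨x₀, b, y₀, hm, hx, rfl, hy⟩

theorem mem_rename_neg {x : ℕ} {b : Act} :
    (x, b) ∈ (ρ.rename r).neg ↔ ∃ x₀, (x₀, b) ∈ ρ.neg ∧ r x₀ = x := by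
  simp only [rename, Set.mem_image, Prod.exists, Prod.mk.injEq]
  constructor
  · rintro ⟨x₀, b₀, hm, hx, rfl⟩
    exact ⟨x₀, hm, hx⟩
  · rintro ⟨x₀, hm, hx⟩
    exact ⟨x₀, b, hm, hx, rfl⟩

theorem targetVars_rename : (ρ.rename r).targetVars = r '' ρ.targetVars := by
  ext y
  constructor
  · rintro ⟨x, b, hm⟩
    obtain ⟨x₀, y₀, hm₀, -, rfl⟩ := mem_rename_pos.mp hm
    exact ⟨y₀, ⟨x₀, b, hm₀⟩, rfl⟩
  · rintro ⟨y₀, ⟨x₀, b, hm₀⟩, rfl⟩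
    exact ⟨r x₀, b, mem_rename_pos.mpr ⟨x₀, y₀, hm₀, rfl, rfl⟩⟩

theorem WF.disjoint_sourceVars_targetVars (hρ : ρ.WF) :
    Disjoint ρ.sourceVars ρ.targetVars :=
  Set.disjoint_right.mpr fun _ ⟨_, _, hm⟩ => (hρ.2.2.1 hm).2

end Rule

section Satisfaction

variable {Tr : Tm Op ar → Act → Tm Op ar → Prop} {ρ : Rule Op ar Act}

theorem satisfies_rename {τ : ℕ → Tm Op ar} {r : ℕ → ℕ} :
    Satisfies Tr τ (ρ.rename r) ↔ Satisfies Tr (fun x => τ (r x)) ρ := by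
  simp only [Satisfies, Rule.mem_rename_pos, Rule.mem_rename_neg]
  constructor
  · rintro ⟨hpos, hneg⟩
    exact ⟨fun x b y hm => hpos ⟨x, y, hm, rfl, rfl⟩, fun x b hm => hneg ⟨x, hm, rfl⟩⟩
  · rintro ⟨hpos, hneg⟩
    refine ⟨?_, ?_⟩
    · rintro _ b _ ⟨x, y, hm, rfl, rfl⟩
      exact hpos hm
    · rintro _ b ⟨x, hm, rfl⟩
      exact hneg hm

theorem Rule.Sound.rename {S : Set Op} (h : ρ.Sound Tr S) (r : ℕ → ℕ) :
    (ρ.rename r).Sound Tr S := fun τ hτ hsat => by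
  have := h (fun x => τ (r x)) (fun x => hτ (r x)) (satisfies_rename.mp hsat)
  simpa only [Rule.rename, Tm.rename_subst] using this

theorem Satisfies.congr (hρ : ρ.WF) {σ τ : ℕ → Tm Op ar}
    (heq : ∀ x ∈ ρ.sourceVars ∪ ρ.targetVars, σ x = τ x) (h : Satisfies Tr σ ρ) :
    Satisfies Tr τ ρ := by
  refine ⟨fun x b y hm => ?_, fun x b hm => ?_⟩
  · rw [← heq x (.inl (hρ.2.2.1 hm).1), ← heq y (.inr ⟨x, b, hm⟩)]
    exact h.1 hm
  · rw [← heq x (.inl (hρ.2.2.2.1 hm))]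
    exact h.2 hm

theorem Satisfies.hypsSat {σ : ℕ → Tm Op ar} (h : Satisfies Tr σ ρ) : HypsSat Tr σ ρ :=
  ⟨fun _ _ y hm => ⟨σ y, h.1 hm⟩, h.2⟩

theorem HypsSat.exists_satisfies {S : Set Op}
    (hcl : ∀ {p a q}, Tr p a q → q.IsClosed ∧ q.ops ⊆ S) (hρ : ρ.WF)
    {σ : ℕ → Tm Op ar} (hσ : ClosedSub S σ) (h : HypsSat Tr σ ρ) :
    ∃ τ, ClosedSub S τ ∧ Satisfies Tr τ ρ ∧
      ∀ y, (∀ x b, (x, b, y) ∈ ρ.pos → Tr (σ x) b (σ y)) → τ y = σ y := by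
  have hchoice : ∀ y, ∃ q : Tm Op ar, (q.IsClosed ∧ q.ops ⊆ S) ∧
      (∀ x b, (x, b, y) ∈ ρ.pos → Tr (σ x) b q) ∧
      ((∀ x b, (x, b, y) ∈ ρ.pos → Tr (σ x) b (σ y)) → q = σ y) := by
    intro y
    by_cases hy : ∀ x b, (x, b, y) ∈ ρ.pos → Tr (σ x) b (σ y)
    · exact ⟨σ y, hσ y, hy, fun _ => rfl⟩
    · simp only [not_forall] at hy
      obtain ⟨x, b, hm, hnot⟩ := hy
      obtain ⟨q, hq⟩ := h.1 hm
      refine ⟨q, hcl hq, fun x' b' hm' => ?_, fun hy' => absurd (hy' x b hm) hnot⟩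
      -- a target variable occurs in only one positive premise
      obtain ⟨rfl, rfl⟩ := hρ.2.2.2.2.1 hm' hm
      exact hq
  choose τ hτcl hτsat hτeq using hchoice
  have hsrc : ∀ x ∈ ρ.sourceVars, τ x = σ x := fun x hx =>
    hτeq x fun _ _ hm => absurd hx (hρ.2.2.1 hm).2
  refine ⟨τ, hτcl, ⟨fun x b y hm => ?_, fun x b hm => ?_⟩, hτeq⟩
  · rw [hsrc x (hρ.2.2.1 hm).1]
    exact hτsat y x b hm
  · rw [hsrc x (hρ.2.2.2.1 hm)]
    exact h.2 hm

end Satisfaction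

section Ruloids

variable {L : Lang Op ar Act} {Tr : Tm Op ar → Act → Tm Op ar → Prop}
  {rul : Tm Op ar → Set (Rule Op ar Act)}

theorem IsValidRuloid.isRuloidFor (hrul : IsRuloidSystem L Tr rul) {Q : Tm Op ar}
    {ρ : Rule Op ar Act} (h : IsValidRuloid rul Q ρ) : IsRuloidFor L.ops ρ Q := by
  obtain ⟨ρ₀, hρ₀, r, hfix, hinj, havoid, rfl⟩ := h
  obtain ⟨hWF, hsrc, hops⟩ := (hrul Q).2.1 ρ₀ hρ₀
  have hfixsrc : ∀ x ∈ ρ₀.sourceVars, r x = x := fun x hx =>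
    hfix x fun hT => Set.disjoint_right.mp hWF.disjoint_sourceVars_targetVars hT hx
  obtain ⟨hfinpos, hfinneg, hpos, hneg, huniq, htgt⟩ := hWF
  have hsrc' : (ρ₀.rename r).src = ρ₀.src := Tm.rename_eq_self hfixsrc
  have hsv : (ρ₀.rename r).sourceVars = ρ₀.sourceVars := congrArg Tm.vars hsrc'
  refine ⟨⟨hfinpos.image _, hfinneg.image _, fun x b y hm => ?_, fun x b hm => ?_,
    fun x b y x' b' hm hm' => ?_, ?_⟩, hsrc'.trans hsrc, (Tm.ops_rename r _).trans_subset hops⟩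
  · obtain ⟨x₀, y₀, hm₀, rfl, rfl⟩ := Rule.mem_rename_pos.mp hm
    rw [hsv, hfixsrc x₀ (hpos hm₀).1]
    exact ⟨(hpos hm₀).1, hsv ▸ havoid y₀ ⟨x₀, b, hm₀⟩⟩
  · obtain ⟨x₀, hm₀, rfl⟩ := Rule.mem_rename_neg.mp hm
    rw [hsv, hfixsrc x₀ (hneg hm₀)]
    exact hneg hm₀
  · obtain ⟨x₀, y₀, hm₀, rfl, hy₀⟩ := Rule.mem_rename_pos.mp hm
    obtain ⟨x₁, y₁, hm₁, rfl, hy₁⟩ := Rule.mem_rename_pos.mp hm'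
    obtain rfl := hinj ⟨x₀, b, hm₀⟩ ⟨x₁, b', hm₁⟩ (hy₀.trans hy₁.symm)
    obtain ⟨rfl, rfl⟩ := huniq hm₀ hm₁
    exact ⟨rfl, rfl⟩
  · rw [Rule.targetVars_rename, hsv]
    intro z hz
    rw [Rule.rename, Tm.vars_rename] at hz
    obtain ⟨z₀, hz₀, rfl⟩ := hz
    rcases htgt hz₀ with hs | ht
    · exact .inl ((hfixsrc z₀ hs).symm ▸ hs)
    · exact .inr ⟨z₀, ht, rfl⟩

theorem IsValidRuloid.sound (hrul : IsRuloidSystem L Tr rul) {Q : Tm Op ar}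
    {ρ : Rule Op ar Act} (h : IsValidRuloid rul Q ρ) : ρ.Sound Tr L.ops := by
  obtain ⟨ρ₀, hρ₀, r, -, -, -, rfl⟩ := h
  exact ((hrul Q).2.2.1 ρ₀ hρ₀).rename r

theorem IsRuloidSystem.exists_ruloid_of_transition (hrul : IsRuloidSystem L Tr rul)
    {P : Tm Op ar} {σ : ℕ → Tm Op ar} (hσ : ClosedSub L.ops σ) {a : Act} {p' : Tm Op ar}
    (h : Tr (P.subst σ) a p') :
    ∃ ρ ∈ rul P, ρ.act = a ∧ ∃ σ', ClosedSub L.ops σ' ∧ Satisfies Tr σ' ρ ∧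
      (∀ x ∉ ρ.targetVars, σ' x = σ x) ∧ ρ.tgt.subst σ' = p' := by
  classical
  obtain ⟨ρ, ⟨hρ, rfl⟩, σ₁, hσ₁, hsat, hsrc, -, rfl⟩ := (hrul P).2.2.2 a σ p' hσ h
  obtain ⟨hWF, hsrcP, -⟩ := (hrul P).2.1 ρ hρ
  have hagree : ∀ x ∈ ρ.sourceVars, σ₁ x = σ x :=
    Tm.eq_on_vars_of_subst_eq ρ.src (hsrc.trans (congrArg (Tm.subst σ) hsrcP.symm))
  have hsrcT : ∀ x ∈ ρ.sourceVars, x ∉ ρ.targetVars := fun x hx =>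
    Set.disjoint_left.mp hWF.disjoint_sourceVars_targetVars hx
  have heq : ∀ x ∈ ρ.sourceVars ∪ ρ.targetVars, σ₁ x = ρ.targetVars.piecewise σ₁ σ x := by
    rintro x (hx | hx)
    · rw [Set.piecewise_eq_of_notMem _ _ _ (hsrcT x hx), hagree x hx]
    · rw [Set.piecewise_eq_of_mem _ _ _ hx]
  refine ⟨ρ, hρ, rfl, _, hσ₁.piecewise _ hσ, hsat.congr hWF heq,
    fun x hx => Set.piecewise_eq_of_notMem _ _ _ hx, (Tm.subst_congr _ fun x hx => ?_).symm⟩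
  exact heq x (hWF.2.2.2.2.2 hx)

end Ruloids

theorem exists_transition_of_hypsSat {S : Set Op} {Tr : Tm Op ar → Act → Tm Op ar → Prop}
    (hcl : ∀ {p a q}, Tr p a q → q.IsClosed ∧ q.ops ⊆ S) {ρ ρ' : Rule Op ar Act}
    (hρ : ρ.WF) (hρ' : ρ'.WF) (hsound : ρ'.Sound Tr S)
    (hdisj : Disjoint ρ.sourceVars ρ'.targetVars)
    (hcommon : ∀ y ∈ ρ.targetVars ∩ ρ'.targetVars,
      ∃ x b, (x, b, y) ∈ ρ.pos ∧ (x, b, y) ∈ ρ'.pos)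
    {σ : ℕ → Tm Op ar} (hσ : ClosedSub S σ) (hsat : Satisfies Tr σ ρ)
    (hhyp : HypsSat Tr σ ρ') :
    ∃ τ, ClosedSub S τ ∧ Tr (ρ'.src.subst σ) ρ'.act (ρ'.tgt.subst τ) ∧
      ρ.tgt.subst τ = ρ.tgt.subst σ := by
  obtain ⟨τ, hτ, hsatτ, hτeq⟩ := hhyp.exists_satisfies hcl hρ' hσ
  have hfresh : ∀ z ∉ ρ'.targetVars, τ z = σ z := fun z hz =>
    hτeq z fun x b hm => absurd ⟨x, b, hm⟩ hz
  have hsrc : ρ'.src.subst τ = ρ'.src.subst σ := Tm.subst_congr _ fun z hz =>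
    hfresh z (Set.disjoint_left.mp hρ'.disjoint_sourceVars_targetVars hz)
  refine ⟨τ, hτ, hsrc ▸ hsound τ hτ hsatτ, Tm.subst_congr _ fun z hz => ?_⟩
  by_cases hz' : z ∈ ρ'.targetVars
  · rcases hρ.2.2.2.2.2 hz with hs | ht
    · exact absurd hz' (Set.disjoint_left.mp hdisj hs)
    obtain ⟨x, b, hm, hm'⟩ := hcommon z ⟨ht, hz'⟩
    refine hτeq z fun x' b' hm'' => ?_
    obtain ⟨rfl, rfl⟩ := hρ'.2.2.2.2.1 hm'' hm'
    exact hsat.1 hm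
  · exact hfresh z hz'

def substClosure (S : Set Op) (R : Tm Op ar → Tm Op ar → Prop) (p q : Tm Op ar) : Prop :=
  ∃ P Q σ, ClosedSub S σ ∧ R P Q ∧ p = P.subst σ ∧ q = Q.subst σ

theorem IsRMBisim.isBisim_substClosure {L : Lang Op ar Act}
    {Tr : Tm Op ar → Act → Tm Op ar → Prop} {rul : Tm Op ar → Set (Rule Op ar Act)}
    {R : Tm Op ar → Tm Op ar → Prop} (hL : L.WellFormed) (hTr : IsTransRel L Tr)
    (hrul : IsRuloidSystem L Tr rul) (hR : IsRMBisim L Tr rul R) :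
    IsBisim Tr (substClosure L.ops R) := by
  refine ⟨fun p q ⟨P, Q, σ, hσ, hPQ, hp, hq⟩ => ⟨Q, P, σ, hσ, hR.1 hPQ, hq, hp⟩, ?_⟩
  rintro _ _ ⟨P, Q, σ, hσ, hPQ, rfl, rfl⟩ a p' htr
  obtain ⟨ρ, hρ, rfl, σ', hσ', hsat, hoff, rfl⟩ := hrul.exists_ruloid_of_transition hσ htr
  obtain ⟨J, -, hJvalid, hJmatch, hJhyps⟩ := hR.2 P Q hPQ ρ hρ
  obtain ⟨ρ', hρ'J, hhyp⟩ := hJhyps σ' hσ' hsat.hypsSat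
  obtain ⟨hact, hRtgt, hdisj, hcommon⟩ := hJmatch ρ' hρ'J
  obtain ⟨hWF', hsrc', -⟩ := (hJvalid ρ' hρ'J).isRuloidFor hrul
  obtain ⟨⟨hdisj₁, -⟩, -, hdisj₂⟩ := by
    simpa only [← Set.disjoint_iff_inter_eq_empty, Set.disjoint_union_left,
      Set.disjoint_union_right] using hdisj
  obtain ⟨τ, hτ, htr', htgt⟩ := exists_transition_of_hypsSat (hTr.target_closed hL)
    ((hrul P).2.1 ρ hρ).1 hWF' ((hJvalid ρ' hρ'J).sound hrul) hdisj₁.symm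
    (fun y hy => let ⟨x, _, b, hb⟩ := hcommon y hy; ⟨x, b, hb⟩) hσ' hsat hhyp
  have hQ : Q.subst σ' = Q.subst σ := Tm.subst_congr Q fun x hx => hoff x fun hT =>
    Set.disjoint_left.mp hdisj₂ hT (show x ∈ ρ'.src.vars by rw [hsrc']; exact hx)
  refine ⟨ρ'.tgt.subst τ, ?_, ρ.tgt, ρ'.tgt, τ, hτ, hRtgt, htgt.symm, rfl⟩
  rw [← hQ, ← hsrc', ← hact]
  exact htr'

theorem rm_bisim_sound_general {Op : Type} {ar : Op → ℕ} {Act : Type}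
    (L : Lang Op ar Act) (hL : L.WellFormed)
    (Tr : Tm Op ar → Act → Tm Op ar → Prop) (hTr : IsTransRel L Tr)
    (rul : Tm Op ar → Set (Rule Op ar Act))
    (hrul : IsRuloidSystem L Tr rul)
    (P Q : Tm Op ar)
    (hRM : RMBisim L Tr rul P Q) :
    ∀ σ, ClosedSub L.ops σ → Bisim Tr (P.subst σ) (Q.subst σ) := by
  obtain ⟨R, hR, hPQ⟩ := hRM
  exact fun σ hσ => ⟨_, hR.isBisim_substClosure hL hTr hrul, P, Q, σ, hσ, hPQ, rfl, rfl⟩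

/-- Soundness: in a GSOS language without junk rules,
rule-matching bisimilar terms are bisimilar under every closed substitution,
i.e. `P ≈RM_G Q` implies `Algbis(G) ⊨ P = Q`. -/
theorem rm_bisim_sound {Op : Type} {ar : Op → ℕ} {Act : Type}
    [Finite Act] [Nonempty Act]
    (L : Lang Op ar Act) (hL : L.WellFormed)
    (Tr : Tm Op ar → Act → Tm Op ar → Prop) (hTr : IsTransRel L Tr)
    (hnj : ∀ ρ ∈ L.rules, ¬ IsJunk L Tr ρ)
    (rul : Tm Op ar → Set (Rule Op ar Act))
    (hrul : IsRuloidSystem L Tr rul) (hjf : JunkFree L Tr rul)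
    (P Q : Tm Op ar) (hP : P.ops ⊆ L.ops) (hQ : Q.ops ⊆ L.ops)
    (hRM : RMBisim L Tr rul P Q) :
    ∀ σ, ClosedSub L.ops σ → Bisim Tr (P.subst σ) (Q.subst σ) :=
  rm_bisim_sound_general L hL Tr hTr rul hrul P Q hRM

end GSOSPaper
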